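/- Condition Д'*_{q_n} with q_n ≡ 1 holds for the cylinder approximations: fix α ∈ (0,2), 0 < τ″ < τ′, and any sequence (r_n) of positive integers with r_n → ∞ and r_n/n → 0. Then lim_{n→∞} n · 𝔪( Γ_n^+ ∩ ⋃_{k=2}^{r_n−1} G^{−k}(Γ_n^+) ) = 0. -/

import Mathlib

open Set MeasureTheory Filter
open scoped ENNReal Topology Classical

/-- The setup of Section 2 of the paper: a full-branched Markov linear map `G` on `[0,1]`
with branch domains `I_1,…,I_{k_I}` (mapped affinely onto `[0,1]`) and complementary
intervals `J_j` (mapped affinely onto `(0,1)`), all of length at most `1/2`. -/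
structure CantorData where
  kI : ℕ
  hkI : 1 ≤ kI
  a : ℕ → ℝ
  ha_lt : ∀ i, i + 1 < 2 * kI → a i < a (i + 1)
  ha0 : 0 ≤ a 0
  ha1 : a (2 * kI - 1) ≤ 1
  G : ℝ → ℝ
  hGmaps : Set.MapsTo G (Set.Icc 0 1) (Set.Icc 0 1)
  hGI : ∀ i < kI, ∃ s c : ℝ,
    |s| * (a (2 * i + 1) - a (2 * i)) = 1 ∧
    (∀ x ∈ Set.Icc (a (2 * i)) (a (2 * i + 1)), G x = s * x + c) ∧
    Set.BijOn G (Set.Icc (a (2 * i)) (a (2 * i + 1))) (Set.Icc 0 1)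
  hGJmid : ∀ i, i + 1 < kI → ∃ s c : ℝ,
    |s| * (a (2 * i + 2) - a (2 * i + 1)) = 1 ∧
    (∀ x ∈ Set.Ioo (a (2 * i + 1)) (a (2 * i + 2)), G x = s * x + c) ∧
    Set.SurjOn G (Set.Ioo (a (2 * i + 1)) (a (2 * i + 2))) (Set.Ioo 0 1)
  hGJleft : 0 < a 0 → ∃ s c : ℝ,
    |s| * a 0 = 1 ∧
    (∀ x ∈ Set.Ico 0 (a 0), G x = s * x + c) ∧
    Set.SurjOn G (Set.Ico 0 (a 0)) (Set.Ioo 0 1)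
  hGJright : a (2 * kI - 1) < 1 → ∃ s c : ℝ,
    |s| * (1 - a (2 * kI - 1)) = 1 ∧
    (∀ x ∈ Set.Ioc (a (2 * kI - 1)) 1, G x = s * x + c) ∧
    Set.SurjOn G (Set.Ioc (a (2 * kI - 1)) 1) (Set.Ioo 0 1)
  hIlen : ∀ i < kI, a (2 * i + 1) - a (2 * i) ≤ 1 / 2
  hJlenL : a 0 ≤ 1 / 2
  hJlenR : 1 - a (2 * kI - 1) ≤ 1 / 2
  hJlenM : ∀ i, i + 1 < kI → a (2 * i + 2) - a (2 * i + 1) ≤ 1 / 2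
  hkJ : (Set.Icc (0:ℝ) 1 \ ⋃ i ∈ Finset.range kI,
      Set.Icc (a (2 * i)) (a (2 * i + 1))).Nonempty

namespace CantorData

variable (S : CantorData)

/-- The union `⋃_i I_i` of the branch domains forming the Cantor construction. -/
def IU : Set ℝ := ⋃ i ∈ Finset.range S.kI, Set.Icc (S.a (2 * i)) (S.a (2 * i + 1))

/-- `Λ_n = {x ∈ [0,1] : G^{i-1}(x) ∈ ⋃ I for all 1 ≤ i ≤ n}`. -/
def Lam (n : ℕ) : Set ℝ := {x ∈ Set.Icc (0:ℝ) 1 | ∀ i < n, S.G^[i] x ∈ S.IU}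

/-- The dynamically defined Cantor set `Λ = ⋂_n Λ_n`. -/
def Cantor : Set ℝ := ⋂ n : ℕ, S.Lam n

/-- `λ = |⋃ I_i| = Σ_i 1/m_i`. -/
noncomputable def lam : ℝ := ∑ i ∈ Finset.range S.kI, (S.a (2 * i + 1) - S.a (2 * i))

/-- `𝔪`, Lebesgue measure on `[0,1]`. -/
noncomputable def mes (_S : CantorData) : Measure ℝ := volume.restrict (Set.Icc 0 1)

/-- `ψ(x) = Σ_{i ∈ 𝓘_x} 2^{-i}` where `𝓘_x = {i ≥ 1 : G^{i-1}(x) ∉ ⋃ I}`. -/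
noncomputable def psi (x : ℝ) : ℝ :=
  ∑' i : ℕ, if S.G^[i] x ∈ S.IU then 0 else (2:ℝ)⁻¹ ^ (i + 1)

/-- `F(t) = 𝔪{x : ψ(x) ≤ t}`, the distribution function of `ψ`. -/
noncomputable def F (t : ℝ) : ℝ := (S.mes {x | S.psi x ≤ t}).toReal

/-- `φ_α = (F ∘ ψ)^{-1/α}`, with value `∞` where `F ∘ ψ` vanishes. -/
noncomputable def phi (α : ℝ) (x : ℝ) : ℝ≥0∞ :=
  ENNReal.ofReal (S.F (S.psi x)) ^ (-(1 / α))

/-- `X_n = φ_α ∘ G^n`. -/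
noncomputable def X (α : ℝ) (n : ℕ) (x : ℝ) : ℝ≥0∞ := S.phi α (S.G^[n] x)

/-- `P_n`: the points following the Cantor construction exactly `n` steps and
never entering `⋃ I` afterwards. -/
def Pset (n : ℕ) : Set ℝ :=
  {x ∈ Set.Icc (0:ℝ) 1 | (∀ i < n, S.G^[i] x ∈ S.IU) ∧ ∀ i, n ≤ i → S.G^[i] x ∉ S.IU}

/-- The family of partition intervals `(I,J)_1,…,(I,J)_{k_I+k_J}`. -/
def PieceFamily : Set (Set ℝ) :=
  ((fun i => Set.Icc (S.a (2 * i)) (S.a (2 * i + 1))) '' Set.Iio S.kI) ∪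
  ((fun i => Set.Ioo (S.a (2 * i + 1)) (S.a (2 * i + 2))) '' {i | i + 1 < S.kI}) ∪
  {Set.Ico (0:ℝ) (S.a 0), Set.Ioc (S.a (2 * S.kI - 1)) 1}

/-- The depth-`d` cylinder `C_w = ⋂_{k=1}^d G^{-(k-1)}((I,J)_{w_k})`. -/
def Cyl (d : ℕ) (w : ℕ → Set ℝ) : Set ℝ := ⋂ k ∈ Finset.range d, (S.G^[k]) ⁻¹' (w k)

/-- `C` is a depth-`d` cylinder. -/
def IsCylinder (d : ℕ) (C : Set ℝ) : Prop :=
  ∃ w : ℕ → Set ℝ, (∀ k < d, w k ∈ S.PieceFamily) ∧ C = S.Cyl d w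

/-- `Υ⁺(A,d)`: union of the depth-`d` cylinders meeting `A`. -/
def upApprox (A : Set ℝ) (d : ℕ) : Set ℝ :=
  ⋃₀ {C | S.IsCylinder d C ∧ (C ∩ A).Nonempty}

/-- `Υ⁻(A,d)`: union of the depth-`d` cylinders contained in `A`. -/
def lowApprox (A : Set ℝ) (d : ℕ) : Set ℝ :=
  ⋃₀ {C | S.IsCylinder d C ∧ C ⊆ A}

/-- `u_n(τ) = (n/τ)^{1/α}`. -/
noncomputable def un (_S : CantorData) (α τ : ℝ) (n : ℕ) : ℝ := ((n : ℝ) / τ) ^ (1 / α)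

/-- `U_n(τ) = {X_0 > u_n(τ)}`. -/
noncomputable def Un (α τ : ℝ) (n : ℕ) : Set ℝ :=
  {x ∈ Set.Icc (0:ℝ) 1 | ENNReal.ofReal (S.un α τ n) < S.X α 0 x}

/-- `U_n^{(1)}(τ) = U_n(τ) ∩ G^{-1}([0,1] ∖ U_n(τ))`. -/
noncomputable def Un1 (α τ : ℝ) (n : ℕ) : Set ℝ :=
  S.Un α τ n ∩ S.G ⁻¹' (Set.Icc 0 1 \ S.Un α τ n)

/-- `U_n(τ',τ'') = U_n(τ') ∖ U_n(τ'')`. -/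
noncomputable def UnPair (α τ' τ'' : ℝ) (n : ℕ) : Set ℝ := S.Un α τ' n \ S.Un α τ'' n

/-- `U_n(τ',τ'')^{(1)}`. -/
noncomputable def UnPair1 (α τ' τ'' : ℝ) (n : ℕ) : Set ℝ :=
  S.UnPair α τ' τ'' n ∩ S.G ⁻¹' (Set.Icc 0 1 \ S.UnPair α τ' τ'' n)

/-- `j_{n,τ}`: the least `j` with `λ^j ≤ τ/n`. -/
noncomputable def jn (τ : ℝ) (n : ℕ) : ℕ := sInf {j : ℕ | S.lam ^ j ≤ τ / n}

/-- `Γ_n^+`: outer approximation of `U_n(τ',τ'')^{(1)}` by depth-`2 j_{n,τ'}` cylinders. -/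
noncomputable def GammaPlus (α τ' τ'' : ℝ) (n : ℕ) : Set ℝ :=
  S.upApprox (S.UnPair1 α τ' τ'' n) (2 * S.jn τ' n)

/-- `Γ_n^-`: inner approximation of `U_n(τ',τ'')^{(1)}` by depth-`2 j_{n,τ'}` cylinders. -/
noncomputable def GammaMinus (α τ' τ'' : ℝ) (n : ℕ) : Set ℝ :=
  S.lowApprox (S.UnPair1 α τ' τ'' n) (2 * S.jn τ' n)

end CantorData

/-!
On every interval `P` of the partition `G` is affine with slope `±1/|P|`, so Lebesgue measure
on `[0,1]` does not grow under preimages and `𝔪(Λ_m ∩ G^{-m} T) ≤ λ^m 𝔪(T)`, while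
`𝔪(Λ_m) = λ^m`. If `x` leaves `⋃ I_i` for the first time at time `m`, then
`2^{-(m+1)} ≤ ψ(x) ≤ 2^{-m}` and so `λ^{m+1} ≤ F(ψ(x)) ≤ λ^m`. A point `y` of
`U_n(τ',τ'')^{(1)}` has `F(ψ(y)) < τ'/n ≤ F(ψ(G y))`, which pins its exit time to two
consecutive values `p, p+1` with `λ^{p+1} < τ'/n`; cylinders of depth `2 j_{n,τ'}` see exit
times that small, so `Γ_n^+` lies in the two corresponding exit sets. A return to them after
`k ≥ 2` steps is impossible before the exit and independent of the past after it, so each of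
the `r_n` terms has measure `O(λ^{2p}) = O(n^{-2})`, and `n · r_n · n^{-2} → 0`.
-/

theorem volume_inter_preimage_le_of_eqOn_affine {f : ℝ → ℝ} {P : Set ℝ} {s c ℓ : ℝ}
    (hℓ : |s| * ℓ = 1) (hf : EqOn f (fun x => s * x + c) P) (T : Set ℝ) :
    volume (P ∩ f ⁻¹' T) ≤ ENNReal.ofReal ℓ * volume T := by
  have hs : s ≠ 0 := by rintro rfl; simp at hℓ
  calc volume (P ∩ f ⁻¹' T)
      ≤ volume ((fun x => s * x) ⁻¹' ((fun y => y + c) ⁻¹' T)) :=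
        measure_mono fun x ⟨hxP, hxT⟩ => by simpa [hf hxP] using hxT
    _ = ENNReal.ofReal ℓ * volume T := by
        rw [Real.volume_preimage_mul_left hs, measure_preimage_add_right, abs_inv,
          ← eq_inv_of_mul_eq_one_right hℓ]

theorem exists_mem_Ioo_or_eq_of_mem_Icc (b : ℕ → ℝ) {N : ℕ} {x : ℝ}
    (hx : x ∈ Icc (b 0) (b N)) :
    (∃ k < N, x ∈ Ioo (b k) (b (k + 1))) ∨ ∃ k ≤ N, x = b k := by
  induction N with
  | zero => exact Or.inr ⟨0, le_rfl, le_antisymm hx.2 hx.1⟩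
  | succ N ih =>
    rcases le_or_gt x (b N) with hxN | hNx
    · rcases ih ⟨hx.1, hxN⟩ with ⟨k, hk, hxk⟩ | ⟨k, hk, rfl⟩
      · exact Or.inl ⟨k, by omega, hxk⟩
      · exact Or.inr ⟨k, by omega, rfl⟩
    · rcases hx.2.lt_or_eq with hlt | rfl
      · exact Or.inl ⟨N, by omega, hNx, hlt⟩
      · exact Or.inr ⟨N + 1, le_rfl, rfl⟩

theorem volume_Icc_inter_preimage_le_of_piecewise_affine {f : ℝ → ℝ} {b : ℕ → ℝ}
    (hb : Monotone b) {N : ℕ}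
    (haff : ∀ k < N, b k < b (k + 1) → ∃ s c : ℝ, |s| * (b (k + 1) - b k) = 1 ∧
      EqOn f (fun x => s * x + c) (Ioo (b k) (b (k + 1))))
    (T : Set ℝ) :
    volume (Icc (b 0) (b N) ∩ f ⁻¹' T) ≤ ENNReal.ofReal (b N - b 0) * volume T := by
  have hcover : Icc (b 0) (b N) ∩ f ⁻¹' T ⊆
      (⋃ k ∈ Finset.range N, Ioo (b k) (b (k + 1)) ∩ f ⁻¹' T) ∪
        ↑(Finset.image b (Finset.range (N + 1))) := by
    rintro x ⟨hx, hxT⟩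
    rcases exists_mem_Ioo_or_eq_of_mem_Icc b hx with ⟨k, hk, hxk⟩ | ⟨k, hk, rfl⟩
    · exact Or.inl (mem_biUnion (Finset.mem_range.2 hk) ⟨hxk, hxT⟩)
    · exact Or.inr (Finset.mem_coe.2 (Finset.mem_image_of_mem b (Finset.mem_range.2 (by omega))))
  have hpiece : ∀ k ∈ Finset.range N, volume (Ioo (b k) (b (k + 1)) ∩ f ⁻¹' T) ≤
      ENNReal.ofReal (b (k + 1) - b k) * volume T := by
    intro k hk
    by_cases hlt : b k < b (k + 1)
    · obtain ⟨s, c, hℓ, hf⟩ := haff k (Finset.mem_range.1 hk) hlt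
      exact volume_inter_preimage_le_of_eqOn_affine hℓ hf T
    · simp [Ioo_eq_empty hlt]
  calc volume (Icc (b 0) (b N) ∩ f ⁻¹' T)
      ≤ ∑ k ∈ Finset.range N, volume (Ioo (b k) (b (k + 1)) ∩ f ⁻¹' T) := by
        refine (measure_mono hcover).trans ((measure_union_le _ _).trans ?_)
        rw [(Finset.finite_toSet _).measure_zero, add_zero]
        exact measure_biUnion_finset_le _ _
    _ ≤ ∑ k ∈ Finset.range N, ENNReal.ofReal (b (k + 1) - b k) * volume T :=
        Finset.sum_le_sum hpiece
    _ = ENNReal.ofReal (b N - b 0) * volume T := by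
        rw [← Finset.sum_mul,
          ← ENNReal.ofReal_sum_of_nonneg fun k _ => sub_nonneg.2 (hb k.le_succ),
          Finset.sum_range_sub]

theorem ENNReal.ofReal_rpow_lt_ofReal_rpow_neg_iff {u t p : ℝ} (hu : 0 < u) (hp : 0 < p) :
    ENNReal.ofReal (u ^ p) < ENNReal.ofReal t ^ (-p) ↔ t < u⁻¹ := by
  rw [← ENNReal.ofReal_rpow_of_nonneg hu.le hp.le, ENNReal.rpow_neg, ← ENNReal.inv_rpow,
    ENNReal.rpow_lt_rpow_iff hp, ENNReal.lt_inv_iff_lt_inv, ← ENNReal.ofReal_inv_of_pos hu,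
    ENNReal.ofReal_lt_ofReal_iff (inv_pos.2 hu)]

namespace CantorData

variable (S : CantorData)

theorem a_strictMonoOn : StrictMonoOn S.a (Iic (2 * S.kI - 1)) :=
  strictMonoOn_Iic_of_lt_succ fun i _ => by
    rw [Order.succ_eq_add_one]; exact S.ha_lt i (by have := S.hkI; omega)

theorem a_lt_a {i j : ℕ} (hij : i < j) (hj : j < 2 * S.kI) : S.a i < S.a j :=
  S.a_strictMonoOn (mem_Iic.2 (by omega)) (mem_Iic.2 (by omega)) hij

theorem a_le_a {i j : ℕ} (hij : i ≤ j) (hj : j < 2 * S.kI) : S.a i ≤ S.a j :=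
  S.a_strictMonoOn.monotoneOn (mem_Iic.2 (by omega)) (mem_Iic.2 (by omega)) hij

theorem a_mem_Icc {i : ℕ} (hi : i < 2 * S.kI) : S.a i ∈ Icc (0 : ℝ) 1 :=
  ⟨S.ha0.trans (S.a_le_a (Nat.zero_le i) hi), (S.a_le_a (by omega) (by omega)).trans S.ha1⟩

theorem Icc_a_subset {i : ℕ} (hi : i < S.kI) :
    Icc (S.a (2 * i)) (S.a (2 * i + 1)) ⊆ Icc (0 : ℝ) 1 :=
  Icc_subset_Icc (S.a_mem_Icc (by omega)).1 (S.a_mem_Icc (by omega)).2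

theorem IU_subset_Icc : S.IU ⊆ Icc (0 : ℝ) 1 :=
  iUnion₂_subset fun _ hi => S.Icc_a_subset (Finset.mem_range.1 hi)

theorem mem_IU_iff {x : ℝ} :
    x ∈ S.IU ↔ ∃ i < S.kI, x ∈ Icc (S.a (2 * i)) (S.a (2 * i + 1)) := by
  simp only [IU, mem_iUnion, Finset.mem_range, exists_prop]

theorem isClosed_IU : IsClosed S.IU := isClosed_biUnion_finset fun _ _ => isClosed_Icc

theorem volume_IU : volume S.IU = ENNReal.ofReal S.lam := by
  have hdisj : PairwiseDisjoint ↑(Finset.range S.kI)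
      fun i => Icc (S.a (2 * i)) (S.a (2 * i + 1)) := by
    intro i hi j hj hij
    simp only [Finset.coe_range, mem_Iio] at hi hj
    rcases lt_or_gt_of_ne hij with h | h
    · have := S.a_lt_a (i := 2 * i + 1) (j := 2 * j) (by omega) (by omega)
      exact disjoint_left.2 fun x hx hx' => by linarith [hx.2, hx'.1]
    · have := S.a_lt_a (i := 2 * j + 1) (j := 2 * i) (by omega) (by omega)
      exact disjoint_left.2 fun x hx hx' => by linarith [hx.1, hx'.2]
  rw [IU, measure_biUnion_finset hdisj fun _ _ => measurableSet_Icc, lam,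
    ENNReal.ofReal_sum_of_nonneg fun i hi =>
      sub_nonneg.2 (S.a_le_a (Nat.le_succ _) (by have := Finset.mem_range.1 hi; omega))]
  simp only [Real.volume_Icc]

theorem lam_pos : 0 < S.lam :=
  Finset.sum_pos (fun i hi => sub_pos.2 (S.a_lt_a (Nat.lt_succ_self _)
      (by have := Finset.mem_range.1 hi; omega)))
    ⟨0, Finset.mem_range.2 S.hkI⟩

/-- The gap `[0,1] ∖ ⋃ I_i` is relatively open and nonempty, hence has positive measure. -/
theorem lam_lt_one : S.lam < 1 := by
  obtain ⟨x, hx, hxIU⟩ : (Icc (0 : ℝ) 1 \ S.IU).Nonempty := S.hkJ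
  have hclosed := S.isClosed_IU
  have hU : (S.IUᶜ ∩ Ioo 0 1).Nonempty := by
    rw [← closure_Ioo zero_ne_one] at hx
    exact mem_closure_iff.1 hx _ hclosed.isOpen_compl hxIU
  have hpos : 0 < volume (S.IUᶜ ∩ Ioo 0 1) :=
    (hclosed.isOpen_compl.inter isOpen_Ioo).measure_pos volume hU
  have hle : volume S.IU + volume (S.IUᶜ ∩ Ioo 0 1) ≤ 1 := by
    rw [← measure_union (disjoint_compl_right.mono_right inter_subset_left)
      (hclosed.isOpen_compl.inter isOpen_Ioo).measurableSet]
    calc volume (S.IU ∪ S.IUᶜ ∩ Ioo 0 1) ≤ volume (Icc (0 : ℝ) 1) :=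
          measure_mono (union_subset S.IU_subset_Icc (inter_subset_right.trans Ioo_subset_Icc_self))
      _ = 1 := by simp
  rw [volume_IU] at hle
  exact ENNReal.ofReal_lt_one.1 ((ENNReal.lt_add_right ENNReal.ofReal_ne_top hpos.ne').trans_le hle)

theorem lam_pow_le_lam_pow_iff {a b : ℕ} : S.lam ^ a ≤ S.lam ^ b ↔ b ≤ a :=
  pow_le_pow_iff_right_of_lt_one₀ S.lam_pos S.lam_lt_one

theorem lam_pow_lt_lam_pow_iff {a b : ℕ} : S.lam ^ a < S.lam ^ b ↔ b < a :=
  pow_lt_pow_iff_right_of_lt_one₀ S.lam_pos S.lam_lt_one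

theorem volume_Icc_diff_IU : volume (Icc (0 : ℝ) 1 \ S.IU) = ENNReal.ofReal (1 - S.lam) := by
  rw [measure_sdiff S.IU_subset_Icc S.isClosed_IU.measurableSet.nullMeasurableSet
      (S.volume_IU ▸ ENNReal.ofReal_ne_top),
    volume_IU, Real.volume_Icc, ENNReal.ofReal_sub _ S.lam_pos.le, sub_zero]

theorem volume_IU_inter_preimage_le (T : Set ℝ) :
    volume (S.IU ∩ S.G ⁻¹' T) ≤ ENNReal.ofReal S.lam * volume T := by
  have hbranch : ∀ i ∈ Finset.range S.kI,
      volume (Icc (S.a (2 * i)) (S.a (2 * i + 1)) ∩ S.G ⁻¹' T) ≤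
        ENNReal.ofReal (S.a (2 * i + 1) - S.a (2 * i)) * volume T := fun i hi =>
    let ⟨_, _, hℓ, hf, _⟩ := S.hGI i (Finset.mem_range.1 hi)
    volume_inter_preimage_le_of_eqOn_affine hℓ hf T
  calc volume (S.IU ∩ S.G ⁻¹' T)
      ≤ ∑ i ∈ Finset.range S.kI,
          volume (Icc (S.a (2 * i)) (S.a (2 * i + 1)) ∩ S.G ⁻¹' T) := by
        rw [IU, iUnion₂_inter]; exact measure_biUnion_finset_le _ _
    _ ≤ _ := Finset.sum_le_sum hbranch
    _ = ENNReal.ofReal S.lam * volume T := by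
        rw [← Finset.sum_mul, lam, ENNReal.ofReal_sum_of_nonneg fun i hi =>
          sub_nonneg.2 (S.a_le_a (Nat.le_succ _) (by have := Finset.mem_range.1 hi; omega))]

/-- Consecutive breakpoints bound the intervals `I_i` and `J_j`, in left-to-right order. -/
noncomputable def breakpoint (k : ℕ) : ℝ :=
  if k = 0 then 0 else if k ≤ 2 * S.kI then S.a (k - 1) else 1

theorem breakpoint_zero : S.breakpoint 0 = 0 := if_pos rfl

theorem breakpoint_of_le {k : ℕ} (hk0 : k ≠ 0) (hk : k ≤ 2 * S.kI) :
    S.breakpoint k = S.a (k - 1) := by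
  rw [breakpoint, if_neg hk0, if_pos hk]

theorem breakpoint_of_lt {k : ℕ} (hk : 2 * S.kI < k) : S.breakpoint k = 1 := by
  rw [breakpoint, if_neg (by omega), if_neg (by omega)]

theorem monotone_breakpoint : Monotone S.breakpoint := by
  refine monotone_nat_of_le_succ fun k => ?_
  rcases Nat.lt_or_ge (2 * S.kI) (k + 1) with hk | hk
  · rw [S.breakpoint_of_lt hk]
    rcases Nat.lt_or_ge (2 * S.kI) k with hk' | hk'
    · rw [S.breakpoint_of_lt hk']
    · rcases Nat.eq_zero_or_pos k with rfl | hk0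
      · rw [breakpoint_zero]; exact zero_le_one
      · rw [S.breakpoint_of_le hk0.ne' hk']; exact (S.a_mem_Icc (by omega)).2
  · rw [S.breakpoint_of_le (by omega) hk]
    rcases Nat.eq_zero_or_pos k with rfl | hk0
    · rw [breakpoint_zero]; exact S.ha0
    · rw [S.breakpoint_of_le hk0.ne' (by omega)]; exact S.a_le_a (by omega) (by omega)

theorem exists_affine_on_Ioo_breakpoint {k : ℕ} (hk : k < 2 * S.kI + 1)
    (hlt : S.breakpoint k < S.breakpoint (k + 1)) :
    ∃ s c : ℝ, |s| * (S.breakpoint (k + 1) - S.breakpoint k) = 1 ∧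
      EqOn S.G (fun x => s * x + c) (Ioo (S.breakpoint k) (S.breakpoint (k + 1))) := by
  have hkI := S.hkI
  rcases Nat.eq_zero_or_pos k with rfl | hk0
  · rw [zero_add, breakpoint_zero, S.breakpoint_of_le one_ne_zero (by omega)] at hlt ⊢
    obtain ⟨s, c, hℓ, hf, -⟩ := S.hGJleft hlt
    exact ⟨s, c, by simpa using hℓ, fun x hx => hf x (Ioo_subset_Ico_self hx)⟩
  rcases Nat.lt_or_ge k (2 * S.kI) with hk' | hk'
  · rw [S.breakpoint_of_le hk0.ne' hk'.le, S.breakpoint_of_le (by omega) hk'] at hlt ⊢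
    rcases Nat.even_or_odd' k with ⟨i, rfl | rfl⟩
    · obtain ⟨s, c, hℓ, hf, -⟩ := S.hGJmid (i - 1) (by omega)
      have h₁ : 2 * (i - 1) + 1 = 2 * i - 1 := by omega
      have h₂ : 2 * (i - 1) + 2 = 2 * i + 1 - 1 := by omega
      rw [h₁, h₂] at hℓ hf
      exact ⟨s, c, hℓ, hf⟩
    · obtain ⟨s, c, hℓ, hf, -⟩ := S.hGI i (by omega)
      exact ⟨s, c, by simpa using hℓ,
        fun x hx => by simpa using hf x (Ioo_subset_Icc_self hx)⟩
  · obtain rfl : k = 2 * S.kI := by omega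
    rw [S.breakpoint_of_le hk0.ne' le_rfl, S.breakpoint_of_lt (by omega)] at hlt ⊢
    obtain ⟨s, c, hℓ, hf, -⟩ := S.hGJright hlt
    exact ⟨s, c, hℓ, fun x hx => hf x (Ioo_subset_Ioc_self hx)⟩

theorem volume_inter_preimage_le (T : Set ℝ) :
    volume (Icc (0 : ℝ) 1 ∩ S.G ⁻¹' T) ≤ volume T := by
  have h := volume_Icc_inter_preimage_le_of_piecewise_affine S.monotone_breakpoint
    (fun k hk => S.exists_affine_on_Ioo_breakpoint hk) T
  rwa [breakpoint_zero, S.breakpoint_of_lt (by omega), sub_zero, ENNReal.ofReal_one, one_mul] at h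

theorem volume_inter_preimage_iterate_le (k : ℕ) (T : Set ℝ) :
    volume (Icc (0 : ℝ) 1 ∩ (S.G^[k]) ⁻¹' T) ≤ volume T := by
  induction k generalizing T with
  | zero => exact measure_mono inter_subset_right
  | succ k ih =>
    calc volume (Icc (0 : ℝ) 1 ∩ (S.G^[k + 1]) ⁻¹' T)
        ≤ volume (Icc (0 : ℝ) 1 ∩ S.G ⁻¹' (Icc 0 1 ∩ (S.G^[k]) ⁻¹' T)) :=
          measure_mono fun x ⟨hx, hxT⟩ => ⟨hx, S.hGmaps hx, by
            rwa [mem_preimage, Function.iterate_succ_apply] at hxT⟩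
      _ ≤ volume T := (S.volume_inter_preimage_le _).trans (ih T)

theorem mem_Lam_succ_iff {m : ℕ} {x : ℝ} :
    x ∈ S.Lam (m + 1) ↔ x ∈ S.IU ∧ S.G x ∈ S.Lam m := by
  simp only [Lam]
  constructor
  · rintro ⟨hx, h⟩
    exact ⟨h 0 m.succ_pos, S.hGmaps hx, fun i hi => h (i + 1) (by omega)⟩
  · rintro ⟨hx, -, h⟩
    refine ⟨S.IU_subset_Icc hx, fun i hi => ?_⟩
    rcases i with _ | i
    · exact hx
    · exact h i (by omega)

theorem volume_Lam_inter_preimage_le (m : ℕ) (T : Set ℝ) :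
    volume (S.Lam m ∩ (S.G^[m]) ⁻¹' T) ≤ ENNReal.ofReal (S.lam ^ m) * volume T := by
  induction m generalizing T with
  | zero => simpa using measure_mono inter_subset_right
  | succ m ih =>
    calc volume (S.Lam (m + 1) ∩ (S.G^[m + 1]) ⁻¹' T)
        ≤ volume (S.IU ∩ S.G ⁻¹' (S.Lam m ∩ (S.G^[m]) ⁻¹' T)) :=
          measure_mono fun x ⟨hx, hxT⟩ => by
            rw [mem_preimage, Function.iterate_succ_apply] at hxT
            exact ⟨(S.mem_Lam_succ_iff.1 hx).1, (S.mem_Lam_succ_iff.1 hx).2, hxT⟩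
      _ ≤ ENNReal.ofReal S.lam * (ENNReal.ofReal (S.lam ^ m) * volume T) :=
          (S.volume_IU_inter_preimage_le _).trans (mul_le_mul_right (ih T) _)
      _ = ENNReal.ofReal (S.lam ^ (m + 1)) * volume T := by
          rw [← mul_assoc, ← ENNReal.ofReal_mul S.lam_pos.le, pow_succ']

theorem volume_Lam_le (m : ℕ) : volume (S.Lam m) ≤ ENNReal.ofReal (S.lam ^ m) := by
  have hsub : S.Lam m ⊆ (S.G^[m]) ⁻¹' Icc 0 1 := fun x hx => S.hGmaps.iterate m hx.1
  have h := S.volume_Lam_inter_preimage_le m (Icc 0 1)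
  rwa [inter_eq_left.2 hsub, Real.volume_Icc, sub_zero,
    ENNReal.ofReal_one, mul_one] at h

theorem volume_Icc_diff_Lam_le (m : ℕ) :
    volume (Icc (0 : ℝ) 1 \ S.Lam m) ≤ ENNReal.ofReal (1 - S.lam ^ m) := by
  induction m with
  | zero =>
    rw [show S.Lam 0 = Icc 0 1 by ext; simp [Lam], sdiff_self, measure_empty]
    exact zero_le
  | succ m ih =>
    calc volume (Icc (0 : ℝ) 1 \ S.Lam (m + 1))
        ≤ volume ((Icc (0 : ℝ) 1 \ S.IU) ∪ S.IU ∩ S.G ⁻¹' (Icc 0 1 \ S.Lam m)) :=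
          measure_mono fun x ⟨hx, hxL⟩ => by
            by_cases hxIU : x ∈ S.IU
            · exact Or.inr ⟨hxIU, S.hGmaps hx,
                fun h => hxL (S.mem_Lam_succ_iff.2 ⟨hxIU, h⟩)⟩
            · exact Or.inl ⟨hx, hxIU⟩
      _ ≤ ENNReal.ofReal (1 - S.lam) + ENNReal.ofReal S.lam * ENNReal.ofReal (1 - S.lam ^ m) :=
          (measure_union_le _ _).trans
            (add_le_add S.volume_Icc_diff_IU.le
              ((S.volume_IU_inter_preimage_le _).trans (mul_le_mul_right ih _)))
      _ = ENNReal.ofReal (1 - S.lam ^ (m + 1)) := by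
          have := pow_le_one₀ S.lam_pos.le S.lam_lt_one.le (n := m)
          rw [← ENNReal.ofReal_mul S.lam_pos.le,
            ← ENNReal.ofReal_add (by linarith [S.lam_lt_one])
              (mul_nonneg S.lam_pos.le (by linarith))]
          ring_nf

theorem le_volume_Lam (m : ℕ) : ENNReal.ofReal (S.lam ^ m) ≤ volume (S.Lam m) := by
  have hpow := pow_le_one₀ S.lam_pos.le S.lam_lt_one.le (n := m)
  refine ENNReal.le_of_add_le_add_right (a := ENNReal.ofReal (1 - S.lam ^ m))
    ENNReal.ofReal_ne_top ?_
  calc ENNReal.ofReal (S.lam ^ m) + ENNReal.ofReal (1 - S.lam ^ m) = volume (Icc (0 : ℝ) 1) := by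
        rw [← ENNReal.ofReal_add (pow_nonneg S.lam_pos.le m) (by linarith), Real.volume_Icc]
        ring_nf
    _ ≤ volume (Icc (0 : ℝ) 1 ∩ S.Lam m) + volume (Icc (0 : ℝ) 1 \ S.Lam m) :=
        measure_le_inter_add_sdiff _ _ _
    _ ≤ volume (S.Lam m) + ENNReal.ofReal (1 - S.lam ^ m) :=
        add_le_add (measure_mono inter_subset_right) (S.volume_Icc_diff_Lam_le m)

theorem volume_Cantor : volume S.Cantor = 0 := by
  have hlim : Tendsto (fun m => ENNReal.ofReal (S.lam ^ m)) atTop (𝓝 0) := by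
    simpa using ENNReal.tendsto_ofReal
      (tendsto_pow_atTop_nhds_zero_of_lt_one S.lam_pos.le S.lam_lt_one)
  exact nonpos_iff_eq_zero.1 (ge_of_tendsto' hlim fun m =>
    (measure_mono (iInter_subset _ m)).trans (S.volume_Lam_le m))

theorem summable_psi (x : ℝ) :
    Summable fun i => if S.G^[i] x ∈ S.IU then (0 : ℝ) else 2⁻¹ ^ (i + 1) :=
  (summable_geometric_two.mul_left 2⁻¹).of_nonneg_of_le (fun i => by positivity)
    fun i => by split_ifs <;> simp [pow_succ', one_div]

theorem psi_le_of_forall_lt {x : ℝ} {m : ℕ} (h : ∀ i < m, S.G^[i] x ∈ S.IU) :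
    S.psi x ≤ 2⁻¹ ^ m := by
  have hbound : ∀ i, (if S.G^[i] x ∈ S.IU then (0 : ℝ) else 2⁻¹ ^ (i + 1)) ≤
      2⁻¹ * if m ≤ i then 2⁻¹ ^ i else 0 := fun i => by
    by_cases hi : m ≤ i
    · split_ifs <;> simp [pow_succ']
    · simp [h i (not_le.1 hi), hi]
  calc S.psi x ≤ ∑' i, 2⁻¹ * if m ≤ i then (2⁻¹ : ℝ) ^ i else 0 :=
        (S.summable_psi x).tsum_le_tsum hbound <| Summable.mul_left _ <|
          summable_geometric_two.of_nonneg_of_le (fun i => by positivity)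
            fun i => by split_ifs <;> simp [one_div]
    _ = 2⁻¹ ^ m := by rw [tsum_mul_left, tsum_geometric_inv_two_ge]; ring

theorem pow_le_psi {x : ℝ} {e : ℕ} (h : S.G^[e] x ∉ S.IU) : 2⁻¹ ^ (e + 1) ≤ S.psi x := by
  simpa [psi, h] using (S.summable_psi x).le_tsum e fun j _ => by split_ifs <;> positivity

theorem pow_add_pow_le_psi {x : ℝ} {e e' : ℕ} (h : S.G^[e] x ∉ S.IU)
    (h' : S.G^[e'] x ∉ S.IU) (hne : e ≠ e') :
    2⁻¹ ^ (e + 1) + 2⁻¹ ^ (e' + 1) ≤ S.psi x := by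
  simpa [psi, Finset.sum_pair hne, h, h'] using
    (S.summable_psi x).sum_le_tsum {e, e'} fun j _ => by split_ifs <;> positivity

/-- Such a point leaves `⋃ I_i` before time `m`, and a second exit would push `ψ` above
`2^{-m}`. -/
theorem iterate_mem_Cantor_of_psi_le {z : ℝ} {m : ℕ} (hz : z ∈ Icc (0 : ℝ) 1)
    (hψ : S.psi z ≤ 2⁻¹ ^ m) (hzΛ : z ∉ S.Lam m) : S.G^[m] z ∈ S.Cantor := by
  obtain ⟨i₀, hi₀, hesc⟩ : ∃ i₀ < m, S.G^[i₀] z ∉ S.IU := by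
    by_contra! h
    exact hzΛ ⟨hz, h⟩
  refine mem_iInter.2 fun n => ⟨S.hGmaps.iterate m hz, fun i _ => ?_⟩
  by_contra hi
  rw [← Function.iterate_add_apply] at hi
  have h₁ := S.pow_add_pow_le_psi hesc hi (by omega)
  have h₂ : (2⁻¹ : ℝ) ^ m ≤ 2⁻¹ ^ (i₀ + 1) :=
    pow_le_pow_of_le_one (by norm_num) (by norm_num) hi₀
  have h₃ : (0 : ℝ) < 2⁻¹ ^ (i + m + 1) := by positivity
  linarith

theorem mes_apply (A : Set ℝ) : S.mes A = volume (A ∩ Icc 0 1) :=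
  Measure.restrict_apply' measurableSet_Icc

theorem F_psi_le {x : ℝ} {m : ℕ} (h : ∀ i < m, S.G^[i] x ∈ S.IU) :
    S.F (S.psi x) ≤ S.lam ^ m := by
  have hsub : {z | S.psi z ≤ S.psi x} ∩ Icc 0 1 ⊆
      S.Lam m ∪ Icc 0 1 ∩ (S.G^[m]) ⁻¹' S.Cantor := fun z ⟨hzψ, hz⟩ => by
    by_cases hzΛ : z ∈ S.Lam m
    · exact Or.inl hzΛ
    · exact Or.inr ⟨hz, S.iterate_mem_Cantor_of_psi_le hz
        (hzψ.trans (S.psi_le_of_forall_lt h)) hzΛ⟩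
  refine ENNReal.toReal_le_of_le_ofReal (by positivity [S.lam_pos]) ?_
  calc S.mes {z | S.psi z ≤ S.psi x}
      ≤ volume (S.Lam m) + volume (Icc 0 1 ∩ (S.G^[m]) ⁻¹' S.Cantor) := by
        rw [mes_apply]; exact (measure_mono hsub).trans (measure_union_le _ _)
    _ ≤ ENNReal.ofReal (S.lam ^ m) + volume S.Cantor :=
        add_le_add (S.volume_Lam_le m) (S.volume_inter_preimage_iterate_le m _)
    _ = ENNReal.ofReal (S.lam ^ m) := by rw [volume_Cantor, add_zero]

theorem pow_le_F_psi {x : ℝ} {e : ℕ} (h : S.G^[e] x ∉ S.IU) :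
    S.lam ^ (e + 1) ≤ S.F (S.psi x) := by
  have hsub : S.Lam (e + 1) ⊆ {z | S.psi z ≤ S.psi x} ∩ Icc 0 1 := fun z hz =>
    ⟨(S.psi_le_of_forall_lt hz.2).trans (S.pow_le_psi h), hz.1⟩
  have hfin : S.mes {z | S.psi z ≤ S.psi x} ≠ ⊤ := by
    rw [mes_apply]
    exact ne_top_of_le_ne_top (by simp) (measure_mono inter_subset_right)
  rw [F, ← ENNReal.ofReal_le_iff_le_toReal hfin, mes_apply]
  exact (S.le_volume_Lam _).trans (measure_mono hsub)

def exitSet (m : ℕ) : Set ℝ := {x ∈ S.Lam m | S.G^[m] x ∉ S.IU}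

theorem iterate_mem_exitSet {x : ℝ} {m k : ℕ} (hx : x ∈ S.exitSet m) (hk : k ≤ m) :
    S.G^[k] x ∈ S.exitSet (m - k) := by
  obtain ⟨⟨hx01, hxI⟩, hxm⟩ := hx
  refine ⟨⟨S.hGmaps.iterate k hx01, fun i hi => ?_⟩, ?_⟩
  · rw [← Function.iterate_add_apply]; exact hxI _ (by omega)
  · rwa [← Function.iterate_add_apply, Nat.sub_add_cancel hk]

theorem disjoint_exitSet {m m' : ℕ} (h : m ≠ m') : Disjoint (S.exitSet m) (S.exitSet m') := by
  wlog hlt : m < m' generalizing m m'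
  · exact (this h.symm (by omega)).symm
  exact disjoint_left.2 fun x hx hx' => hx.2 (hx'.1.2 m hlt)

theorem volume_exitSet_inter_preimage_le {m k : ℕ} (hmk : m ≤ k) (A : Set ℝ) :
    volume (S.exitSet m ∩ (S.G^[k]) ⁻¹' A) ≤ ENNReal.ofReal (S.lam ^ m) * volume A := by
  calc volume (S.exitSet m ∩ (S.G^[k]) ⁻¹' A)
      ≤ volume (S.Lam m ∩ (S.G^[m]) ⁻¹' (Icc 0 1 ∩ (S.G^[k - m]) ⁻¹' A)) :=
        measure_mono fun x ⟨hx, hxA⟩ => ⟨hx.1, S.hGmaps.iterate m hx.1.1, by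
          rwa [mem_preimage, ← Function.iterate_add_apply, Nat.sub_add_cancel hmk]⟩
    _ ≤ ENNReal.ofReal (S.lam ^ m) * volume A :=
        (S.volume_Lam_inter_preimage_le m _).trans
          (mul_le_mul_right (S.volume_inter_preimage_iterate_le _ A) _)

/-- For `k ≤ m` the set is empty, as `G^k` maps `exitSet m` into `exitSet (m - k)`; for `k > m`
the condition at time `k` is independent of the first `m` steps. -/
theorem volume_exitSet_inter_preimage_exitSet_le {m m' k : ℕ} (hk : 2 ≤ k) (hm : m ≤ m' + 1) :
    volume (S.exitSet m ∩ (S.G^[k]) ⁻¹' S.exitSet m') ≤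
      ENNReal.ofReal (S.lam ^ m) * ENNReal.ofReal (S.lam ^ m') := by
  rcases le_or_gt k m with hkm | hmk
  · have hempty : S.exitSet m ∩ (S.G^[k]) ⁻¹' S.exitSet m' = ∅ :=
      eq_empty_of_forall_notMem fun x ⟨hx, hx'⟩ =>
        (S.disjoint_exitSet (by omega : m - k ≠ m')).notMem_of_mem_left
          (S.iterate_mem_exitSet hx hkm) hx'
    simp [hempty]
  · exact (S.volume_exitSet_inter_preimage_le hmk.le _).trans
      (mul_le_mul_right ((measure_mono fun _ hx => hx.1).trans (S.volume_Lam_le m')) _)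

theorem subset_Icc_and_subset_IU_or_disjoint {P : Set ℝ} (hP : P ∈ S.PieceFamily) :
    P ⊆ Icc 0 1 ∧ (P ⊆ S.IU ∨ Disjoint P S.IU) := by
  have hkI := S.hkI
  rcases hP with (⟨i, hi, rfl⟩ | ⟨i, hi, rfl⟩) | rfl | rfl
  · exact ⟨S.Icc_a_subset hi, Or.inl fun x hx => S.mem_IU_iff.2 ⟨i, hi, hx⟩⟩
  · replace hi : i + 1 < S.kI := hi
    refine ⟨Ioo_subset_Icc_self.trans (Icc_subset_Icc (S.a_mem_Icc (by omega)).1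
      (S.a_mem_Icc (by omega)).2), Or.inr (disjoint_left.2 fun x hx hxIU => ?_)⟩
    obtain ⟨i', hi', hx'⟩ := S.mem_IU_iff.1 hxIU
    rcases le_or_gt i' i with h | h
    · linarith [hx.1, hx'.2, S.a_le_a (i := 2 * i' + 1) (j := 2 * i + 1) (by omega) (by omega)]
    · linarith [hx.2, hx'.1, S.a_le_a (i := 2 * i + 2) (j := 2 * i') (by omega) (by omega)]
  · refine ⟨fun x hx => ⟨hx.1, hx.2.le.trans (S.a_mem_Icc (by omega)).2⟩,
      Or.inr (disjoint_left.2 fun x hx hxIU => ?_)⟩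
    obtain ⟨i, hi, hx'⟩ := S.mem_IU_iff.1 hxIU
    linarith [hx.2, hx'.1, S.a_le_a (i := 0) (j := 2 * i) (by omega) (by omega)]
  · refine ⟨fun x hx => ⟨(S.a_mem_Icc (by omega)).1.trans hx.1.le, hx.2⟩,
      Or.inr (disjoint_left.2 fun x hx hxIU => ?_)⟩
    obtain ⟨i, hi, hx'⟩ := S.mem_IU_iff.1 hxIU
    linarith [hx.1, hx'.2, S.a_le_a (i := 2 * i + 1) (j := 2 * S.kI - 1) (by omega) (by omega)]

theorem mem_Cyl_iff {d : ℕ} {w : ℕ → Set ℝ} {x : ℝ} :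
    x ∈ S.Cyl d w ↔ ∀ k < d, S.G^[k] x ∈ w k := by
  simp [Cyl]

/-- Every piece lies inside `⋃ I_i` or outside it, so a cylinder of depth `d` fixes the
itinerary relative to `⋃ I_i` up to time `d`. -/
theorem mem_exitSet_of_mem_Cyl {d : ℕ} {w : ℕ → Set ℝ}
    (hw : ∀ k < d, w k ∈ S.PieceFamily)
    {x y : ℝ} (hx : x ∈ S.Cyl d w) (hy : y ∈ S.Cyl d w) {m : ℕ} (hm : m < d)
    (hyE : y ∈ S.exitSet m) : x ∈ S.exitSet m := by
  have hiff : ∀ k < d, S.G^[k] x ∈ S.IU ↔ S.G^[k] y ∈ S.IU := fun k hk => by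
    have hxk := S.mem_Cyl_iff.1 hx k hk
    have hyk := S.mem_Cyl_iff.1 hy k hk
    rcases (S.subset_Icc_and_subset_IU_or_disjoint (hw k hk)).2 with h | h
    · exact iff_of_true (h hxk) (h hyk)
    · exact iff_of_false (h.notMem_of_mem_left hxk) (h.notMem_of_mem_left hyk)
  refine ⟨⟨(S.subset_Icc_and_subset_IU_or_disjoint (hw 0 (by omega))).1
    (S.mem_Cyl_iff.1 hx 0 (by omega)), fun i hi => (hiff i (by omega)).2 (hyE.1.2 i hi)⟩,
    fun h => hyE.2 ((hiff m hm).1 h)⟩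

theorem mem_Un_iff {α τ : ℝ} (hα : 0 < α) (hτ : 0 < τ) {n : ℕ} (hn : 0 < n) {x : ℝ} :
    x ∈ S.Un α τ n ↔ x ∈ Icc (0 : ℝ) 1 ∧ S.F (S.psi x) < τ / n := by
  rw [Un, mem_sep_iff, un, X, phi, Function.iterate_zero_apply,
    ENNReal.ofReal_rpow_lt_ofReal_rpow_neg_iff (by positivity) (by positivity), inv_div]

theorem exists_mem_exitSet_of_F_psi_pos {x : ℝ} (hx : x ∈ Icc (0 : ℝ) 1)
    (hF : 0 < S.F (S.psi x)) : ∃ m, x ∈ S.exitSet m := by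
  have hexit : ∃ m, S.G^[m] x ∉ S.IU := by
    by_contra! h
    have hlim := tendsto_pow_atTop_nhds_zero_of_lt_one S.lam_pos.le S.lam_lt_one
    exact hF.not_ge (ge_of_tendsto' hlim fun m => S.F_psi_le fun i _ => h i)
  exact ⟨Nat.find hexit, ⟨hx, fun i hi => not_not.1 (Nat.find_min hexit hi)⟩,
    Nat.find_spec hexit⟩

/-- `G y` exits at time `m - 1`, so `F(ψ(G y)) ≥ λ^m ≥ F(ψ y) ≥ τ''/n`; hence
`G y ∉ U_n(τ'')`, and as `G y ∉ U_n(τ',τ'')` also `G y ∉ U_n(τ')`, i.e.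
`τ'/n ≤ F(ψ(G y)) ≤ λ^{m-1}`. -/
theorem exists_exitSet_window {α τ' τ'' : ℝ} (hα : 0 < α) (h1 : 0 < τ'') (h2 : τ'' < τ')
    {n : ℕ} (hn : 0 < n) (hlam : τ' / n < S.lam) {y : ℝ} (hy : y ∈ S.UnPair1 α τ' τ'' n) :
    ∃ m, y ∈ S.exitSet m ∧ S.lam ^ (m + 1) < τ' / n ∧ τ' / n ≤ S.lam ^ (m - 1) := by
  have hτ' : 0 < τ' := h1.trans h2
  obtain ⟨⟨hyU', hyU''⟩, hGy01, hGy⟩ := hy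
  obtain ⟨hy01, hFy⟩ := (S.mem_Un_iff hα hτ' hn).1 hyU'
  have hFy'' : τ'' / n ≤ S.F (S.psi y) :=
    not_lt.1 fun h => hyU'' ((S.mem_Un_iff hα h1 hn).2 ⟨hy01, h⟩)
  obtain ⟨m, hm⟩ :=
    S.exists_mem_exitSet_of_F_psi_pos hy01 (lt_of_lt_of_le (by positivity) hFy'')
  have hlow : S.lam ^ (m + 1) ≤ S.F (S.psi y) := S.pow_le_F_psi hm.2
  have hm1 : 1 ≤ m := by
    by_contra! h
    obtain rfl : m = 0 := by omega
    rw [zero_add, pow_one] at hlow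
    linarith
  have hGym : S.G y ∈ S.exitSet (m - 1) := S.iterate_mem_exitSet hm hm1
  have hFGy_low : S.lam ^ m ≤ S.F (S.psi (S.G y)) := by
    simpa [Nat.sub_add_cancel hm1] using S.pow_le_F_psi hGym.2
  have hGyU'' : S.G y ∉ S.Un α τ'' n := fun h => by
    linarith [((S.mem_Un_iff hα h1 hn).1 h).2, S.F_psi_le hm.1.2]
  have hFGy : τ' / n ≤ S.F (S.psi (S.G y)) :=
    not_lt.1 fun h => hGy ⟨(S.mem_Un_iff hα hτ' hn).2 ⟨hGy01, h⟩, hGyU''⟩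
  exact ⟨m, hm, hlow.trans_lt hFy, hFGy.trans (S.F_psi_le hGym.1.2)⟩

theorem lam_pow_jn_le {τ : ℝ} (hτ : 0 < τ) {n : ℕ} (hn : 0 < n) :
    S.lam ^ S.jn τ n ≤ τ / n := by
  obtain ⟨k, hk⟩ := exists_pow_lt_of_lt_one (by positivity : 0 < τ / n) S.lam_lt_one
  exact Nat.sInf_mem (s := {j | S.lam ^ j ≤ τ / n}) ⟨k, hk.le⟩

theorem GammaPlus_subset {α τ' τ'' : ℝ} (hα : 0 < α) (h1 : 0 < τ'') (h2 : τ'' < τ')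
    {n : ℕ} (hn : 0 < n) (hlam : τ' / n < S.lam) :
    ∃ p, S.lam ^ (p + 1) < τ' / n ∧
      S.GammaPlus α τ' τ'' n ⊆ S.exitSet p ∪ S.exitSet (p + 1) := by
  have hτ' : 0 < τ' := h1.trans h2
  have hex : ∃ p, S.lam ^ (p + 1) < τ' / n := by
    obtain ⟨k, hk⟩ := exists_pow_lt_of_lt_one (by positivity : 0 < τ' / n) S.lam_lt_one
    exact ⟨k, (S.lam_pow_le_lam_pow_iff.2 k.le_succ).trans_lt hk⟩
  have hj := S.lam_pow_jn_le hτ' hn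
  have hj2 : 2 ≤ S.jn τ' n := by
    by_contra! h
    have : S.lam ^ 1 ≤ S.lam ^ S.jn τ' n := S.lam_pow_le_lam_pow_iff.2 (by omega)
    rw [pow_one] at this
    linarith
  refine ⟨Nat.find hex, Nat.find_spec hex, ?_⟩
  rintro x ⟨_, ⟨⟨w, hw, rfl⟩, y, hyC, hyU⟩, hxC⟩
  obtain ⟨m, hym, hm_lo, hm_hi⟩ := S.exists_exitSet_window hα h1 h2 hn hlam hyU
  have hmj : m - 1 ≤ S.jn τ' n := S.lam_pow_le_lam_pow_iff.1 (hj.trans hm_hi)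
  have hxm := S.mem_exitSet_of_mem_Cyl hw hxC hyC (by omega) hym
  have hpm : Nat.find hex ≤ m := Nat.find_min' hex hm_lo
  have hmp : m - 1 < Nat.find hex + 1 :=
    S.lam_pow_lt_lam_pow_iff.1 ((Nat.find_spec hex).trans_le hm_hi)
  obtain rfl | rfl : m = Nat.find hex ∨ m = Nat.find hex + 1 := by omega
  exacts [Or.inl hxm, Or.inr hxm]

theorem volume_exitSet_pair_inter_preimage_le (p : ℕ) {k : ℕ} (hk : 2 ≤ k) :
    volume ((S.exitSet p ∪ S.exitSet (p + 1)) ∩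
        (S.G^[k]) ⁻¹' (S.exitSet p ∪ S.exitSet (p + 1))) ≤
      4 * ENNReal.ofReal (S.lam ^ p) ^ 2 := by
  have hterm : ∀ m m', p ≤ m → p ≤ m' → m ≤ m' + 1 →
      volume (S.exitSet m ∩ (S.G^[k]) ⁻¹' S.exitSet m') ≤ ENNReal.ofReal (S.lam ^ p) ^ 2 :=
    fun m m' hm hm' hmm' => (S.volume_exitSet_inter_preimage_exitSet_le hk hmm').trans <| by
      rw [sq]
      exact mul_le_mul' (ENNReal.ofReal_le_ofReal (S.lam_pow_le_lam_pow_iff.2 hm))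
        (ENNReal.ofReal_le_ofReal (S.lam_pow_le_lam_pow_iff.2 hm'))
  rw [preimage_union, inter_union_distrib_left, union_inter_distrib_right,
    union_inter_distrib_right]
  calc _ ≤ (volume (S.exitSet p ∩ (S.G^[k]) ⁻¹' S.exitSet p) +
          volume (S.exitSet (p + 1) ∩ (S.G^[k]) ⁻¹' S.exitSet p)) +
        (volume (S.exitSet p ∩ (S.G^[k]) ⁻¹' S.exitSet (p + 1)) +
          volume (S.exitSet (p + 1) ∩ (S.G^[k]) ⁻¹' S.exitSet (p + 1))) :=
        (measure_union_le _ _).trans (add_le_add (measure_union_le _ _) (measure_union_le _ _))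
    _ ≤ 4 * ENNReal.ofReal (S.lam ^ p) ^ 2 := by
        have := hterm p p le_rfl le_rfl (by omega)
        have := hterm (p + 1) p (by omega) le_rfl le_rfl
        have := hterm p (p + 1) le_rfl (by omega) (by omega)
        have := hterm (p + 1) (p + 1) (by omega) (by omega) (by omega)
        calc _ ≤ (ENNReal.ofReal (S.lam ^ p) ^ 2 + ENNReal.ofReal (S.lam ^ p) ^ 2) +
              (ENNReal.ofReal (S.lam ^ p) ^ 2 + ENNReal.ofReal (S.lam ^ p) ^ 2) := by gcongr
          _ = _ := by ring

theorem toReal_mes_GammaPlus_inter_le {α τ' τ'' : ℝ} (hα : 0 < α) (h1 : 0 < τ'')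
    (h2 : τ'' < τ') {n : ℕ} (hn : 0 < n) (hlam : τ' / n < S.lam) (r : ℕ) :
    (S.mes (S.GammaPlus α τ' τ'' n ∩
        ⋃ k ∈ Finset.Icc 2 (r - 1), (S.G^[k]) ⁻¹' S.GammaPlus α τ' τ'' n)).toReal ≤
      r * (4 * (τ' / (n * S.lam)) ^ 2) := by
  have hτ' : 0 < τ' := h1.trans h2
  obtain ⟨p, hp, hΓ⟩ := S.GammaPlus_subset hα h1 h2 hn hlam
  have hlam_p : S.lam ^ p ≤ τ' / (n * S.lam) := by
    rw [le_div_iff₀ (by positivity [S.lam_pos]), ← mul_assoc, mul_right_comm, ← pow_succ]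
    exact ((lt_div_iff₀ (by positivity)).1 hp).le
  refine ENNReal.toReal_le_of_le_ofReal (by positivity) ?_
  calc S.mes (S.GammaPlus α τ' τ'' n ∩
        ⋃ k ∈ Finset.Icc 2 (r - 1), (S.G^[k]) ⁻¹' S.GammaPlus α τ' τ'' n)
      ≤ ∑ k ∈ Finset.Icc 2 (r - 1), volume ((S.exitSet p ∪ S.exitSet (p + 1)) ∩
          (S.G^[k]) ⁻¹' (S.exitSet p ∪ S.exitSet (p + 1))) := by
        rw [mes_apply, inter_iUnion₂, iUnion₂_inter]
        refine (measure_mono fun x hx => ?_).trans (measure_biUnion_finset_le _ _)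
        simp only [mem_iUnion, mem_inter_iff, mem_preimage] at hx ⊢
        obtain ⟨k, hk, ⟨hxΓ, hkΓ⟩, -⟩ := hx
        exact ⟨k, hk, hΓ hxΓ, hΓ hkΓ⟩
    _ ≤ ∑ _k ∈ Finset.Icc 2 (r - 1), 4 * ENNReal.ofReal (S.lam ^ p) ^ 2 :=
        Finset.sum_le_sum fun k hk => S.volume_exitSet_pair_inter_preimage_le p
          (Finset.mem_Icc.1 hk).1
    _ ≤ r * (4 * ENNReal.ofReal (S.lam ^ p) ^ 2) := by
        rw [Finset.sum_const, nsmul_eq_mul, Nat.card_Icc]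
        gcongr
        exact_mod_cast (by omega : r - 1 + 1 - 2 ≤ r)
    _ ≤ ENNReal.ofReal (r * (4 * (τ' / (n * S.lam)) ^ 2)) := by
        rw [ENNReal.ofReal_mul (by positivity), ENNReal.ofReal_mul (by positivity),
          ENNReal.ofReal_pow (by positivity [S.lam_pos] : 0 ≤ τ' / (n * S.lam)) 2,
          ENNReal.ofReal_natCast, ENNReal.ofReal_ofNat]
        gcongr

end CantorData

theorem D_prime_condition_general (S : CantorData) (α : ℝ)
    (hα : α ∈ Set.Ioo (0:ℝ) 2) (τ' τ'' : ℝ) (h1 : 0 < τ'') (h2 : τ'' < τ')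
    (r : ℕ → ℕ)
    (hrn : Filter.Tendsto (fun n : ℕ => (r n : ℝ) / (n : ℝ)) Filter.atTop (𝓝 0)) :
    Filter.Tendsto
      (fun n : ℕ => (n : ℝ) *
        (S.mes (S.GammaPlus α τ' τ'' n ∩
          ⋃ k ∈ Finset.Icc 2 (r n - 1), (S.G^[k]) ⁻¹' (S.GammaPlus α τ' τ'' n))).toReal)
      Filter.atTop (𝓝 0) := by
  have hlam := S.lam_pos
  refine squeeze_zero' (Eventually.of_forall fun n => by positivity)
    (g := fun n => (r n : ℝ) / n * (4 * τ' ^ 2 / S.lam ^ 2)) ?_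
    (by simpa using hrn.mul_const (4 * τ' ^ 2 / S.lam ^ 2))
  filter_upwards [eventually_gt_atTop ⌈τ' / S.lam⌉₊] with n hn
  have hn0 : 0 < n := (Nat.zero_le _).trans_lt hn
  have hn0' : (0 : ℝ) < n := Nat.cast_pos.2 hn0
  have hτn : τ' / n < S.lam := by
    rw [div_lt_iff₀ hn0', mul_comm, ← div_lt_iff₀ hlam]
    exact Nat.lt_of_ceil_lt hn
  calc (n : ℝ) * _ ≤ n * (r n * (4 * (τ' / (n * S.lam)) ^ 2)) :=
        mul_le_mul_of_nonneg_left
          (S.toReal_mes_GammaPlus_inter_le hα.1 h1 h2 hn0 hτn (r n)) hn0'.le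
    _ = r n / n * (4 * τ' ^ 2 / S.lam ^ 2) := by field_simp

/-- condition `Д'*_{q_n}` with `q_n ≡ 1` for the cylinder
approximations: `n · 𝔪(Γ_n^+ ∩ ⋃_{k=2}^{r_n-1} G^{-k}(Γ_n^+)) → 0`. -/
theorem D_prime_condition (S : CantorData) (α : ℝ)
    (hα : α ∈ Set.Ioo (0:ℝ) 2) (τ' τ'' : ℝ) (h1 : 0 < τ'') (h2 : τ'' < τ')
    (r : ℕ → ℕ) (hr0 : ∀ n, 0 < r n)
    (hr : Filter.Tendsto (fun n : ℕ => (r n : ℝ)) Filter.atTop Filter.atTop)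
    (hrn : Filter.Tendsto (fun n : ℕ => (r n : ℝ) / (n : ℝ)) Filter.atTop (𝓝 0)) :
    Filter.Tendsto
      (fun n : ℕ => (n : ℝ) *
        (S.mes (S.GammaPlus α τ' τ'' n ∩
          ⋃ k ∈ Finset.Icc 2 (r n - 1), (S.G^[k]) ⁻¹' (S.GammaPlus α τ' τ'' n))).toReal)
      Filter.atTop (𝓝 0) :=
  D_prime_condition_general S α hα τ' τ'' h1 h2 r hrn
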